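/- arXiv:1612.08721 — 4 statements merged into one kernel-verified Lean document; each statement's English description precedes it below -/
import Mathlib

section
/- For every u ∈ (0,1) there exists a constant c depending only on u such that for all integers d ≥ 2 and X = d^u, the set G_d†(X) = {(a0,...,a3) ∈ G_d : d > max_i gcd(d, a_i) > X} satisfies |G_d†(X)| ≤ c · d^{-u/2} · |G_d|, where G_d = {a ∈ (ℤ/dℤ)^4 : Σ a_i = 0} has cardinality d^3. -/
/-!
If `gcd(d, aᵢ) > X` then `aᵢ` is a multiple of some divisor `g > X` of `d`, and each divisor
accounts for at most `d/g < d/X` residues, so the coordinate `aᵢ` has at most `τ(d) · d/X`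
possible values. A point of `G_d` is determined by any three of its coordinates, so choosing
`i`, then `aᵢ`, then two further coordinates gives `|G_d†(X)| ≤ 4 τ(d) d³ / X`, and the
divisor bound `τ(d) ≪ d^{u/2}` finishes the proof.
-/

open Finset Real

lemma add_one_le_mul_two_rpow_pow {v : ℝ} (hv : 0 < v) (a : ℕ) :
    (a + 1 : ℝ) ≤ (1 + (v * log 2)⁻¹) * ((2 : ℝ) ^ v) ^ a := by
  have hvlog : 0 < v * log 2 := mul_pos hv (log_pos one_lt_two)
  set t := v * log 2 * a
  have hexp : 1 + t ≤ ((2 : ℝ) ^ v) ^ a := by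
    rw [← rpow_mul_natCast zero_le_two, rpow_def_of_pos two_pos]
    linarith [add_one_le_exp (log 2 * (v * a))]
  have ht : (v * log 2)⁻¹ * t = a := by simp only [t]; field_simp
  nlinarith [inv_pos.2 hvlog, (by positivity : 0 ≤ t)]

lemma add_one_le_ite_mul_rpow_pow {v x : ℝ} (hv : 0 < v) (hx : 2 ≤ x) (a : ℕ) :
    (a + 1 : ℝ) ≤ (if x ^ v < 2 then 1 + (v * log 2)⁻¹ else 1) * (x ^ v) ^ a := by
  split_ifs with hxv
  · calc (a + 1 : ℝ) ≤ (1 + (v * log 2)⁻¹) * ((2 : ℝ) ^ v) ^ a :=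
          add_one_le_mul_two_rpow_pow hv a
      _ ≤ (1 + (v * log 2)⁻¹) * (x ^ v) ^ a := by
        have := log_pos one_lt_two
        gcongr
  · calc (a + 1 : ℝ) ≤ 2 ^ a := by exact_mod_cast Nat.lt_two_pow_self
      _ ≤ (x ^ v) ^ a := by gcongr; linarith
      _ = 1 * (x ^ v) ^ a := (one_mul _).symm

lemma card_filter_rpow_lt_two_le {v : ℝ} (hv : 0 < v) (s : Finset ℕ) :
    #{p ∈ s | ((p : ℕ) : ℝ) ^ v < 2} ≤ ⌈(2 : ℝ) ^ v⁻¹⌉₊ := by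
  calc #{p ∈ s | ((p : ℕ) : ℝ) ^ v < 2} ≤ #(range ⌈(2 : ℝ) ^ v⁻¹⌉₊) := by
        refine card_le_card fun p hp => ?_
        rw [mem_filter] at hp
        rw [mem_range, Nat.lt_ceil]
        exact (lt_rpow_inv_iff_of_pos p.cast_nonneg zero_le_two hv).2 hp.2
    _ = ⌈(2 : ℝ) ^ v⁻¹⌉₊ := card_range _

theorem exists_card_divisors_le_mul_rpow {v : ℝ} (hv : 0 < v) :
    ∃ c : ℝ, 0 < c ∧ ∀ n : ℕ, n ≠ 0 → (#n.divisors : ℝ) ≤ c * (n : ℝ) ^ v := by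
  set C := 1 + (v * log 2)⁻¹
  have hC : 1 ≤ C := le_add_of_nonneg_right (inv_nonneg.2 (by positivity))
  refine ⟨C ^ ⌈(2 : ℝ) ^ v⁻¹⌉₊, by positivity, fun n hn => ?_⟩
  -- Each factor `aₚ + 1` of `τ(n)` is at most `(p ^ v) ^ aₚ`, up to a factor `C` for the
  -- at most `⌈2 ^ (1 / v)⌉` primes with `p ^ v < 2`.
  let f : ℕ → ℝ := fun p => if (p : ℝ) ^ v < 2 then C else 1
  have hf : ∏ p ∈ n.primeFactors, f p ≤ C ^ ⌈(2 : ℝ) ^ v⁻¹⌉₊ := by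
    simp only [f, prod_ite, prod_const, one_pow, mul_one]
    exact pow_le_pow_right₀ hC (card_filter_rpow_lt_two_le hv _)
  have hpow : ∏ p ∈ n.primeFactors, ((p : ℝ) ^ v) ^ n.factorization p = (n : ℝ) ^ v := by
    simp_rw [rpow_pow_comm (Nat.cast_nonneg _)]
    rw [finsetProd_rpow _ _ (fun p _ => by positivity)]
    congr 1
    exact_mod_cast Nat.prod_factorization_pow_eq_self hn
  calc (#n.divisors : ℝ) = ∏ p ∈ n.primeFactors, ((n.factorization p : ℝ) + 1) := by
        rw [Nat.card_divisors hn]; push_cast; rfl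
    _ ≤ ∏ p ∈ n.primeFactors, f p * ((p : ℝ) ^ v) ^ n.factorization p :=
        prod_le_prod (fun _ _ => by positivity) fun p hp =>
          add_one_le_ite_mul_rpow_pow hv
            (by exact_mod_cast (Nat.prime_of_mem_primeFactors hp).two_le) _
    _ ≤ C ^ ⌈(2 : ℝ) ^ v⁻¹⌉₊ * (n : ℝ) ^ v := by
        rw [prod_mul_distrib, hpow]; gcongr

lemma ZMod.card_filter_dvd_val_le {d g : ℕ} [NeZero d] (hg : g ∣ d) :
    #{b : ZMod d | g ∣ b.val} ≤ d / g := by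
  calc #{b : ZMod d | g ∣ b.val} ≤ #(range (d / g)) := by
        refine card_le_card_of_injOn (fun b => b.val / g) (fun b _ => ?_) fun b hb c hc h => ?_
        · exact mem_range.2 (Nat.div_lt_div_of_lt_of_dvd hg (ZMod.val_lt b))
        · simp only [coe_filter, Set.mem_ofPred_eq, mem_univ, true_and] at hb hc
          exact ZMod.val_injective d <| by
            rw [← Nat.div_mul_cancel hb, ← Nat.div_mul_cancel hc]; exact congrArg (· * g) h
    _ = d / g := card_range _

lemma ZMod.card_filter_lt_gcd_val_le {d : ℕ} [NeZero d] {X : ℝ} (hX : 0 < X) :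
    (#{b : ZMod d | X < (d.gcd b.val : ℝ)} : ℝ) ≤ #d.divisors * (d / X) := by
  set D := {g ∈ d.divisors | X < ((g : ℕ) : ℝ)}
  have hsub : ({b : ZMod d | X < (d.gcd b.val : ℝ)} : Finset _) ⊆
      D.biUnion fun g => {b : ZMod d | g ∣ b.val} := by
    intro b hb
    rw [mem_filter] at hb
    rw [mem_biUnion]
    refine ⟨d.gcd b.val, mem_filter.2 ⟨?_, hb.2⟩,
      mem_filter.2 ⟨mem_univ _, Nat.gcd_dvd_right _ _⟩⟩
    exact Nat.mem_divisors.2 ⟨Nat.gcd_dvd_left _ _, NeZero.ne d⟩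
  have hmult : ∀ g ∈ D, (#{b : ZMod d | g ∣ b.val} : ℝ) ≤ d / X := by
    intro g hg
    obtain ⟨hgd, hgX⟩ := mem_filter.1 hg
    calc (#{b : ZMod d | g ∣ b.val} : ℝ) ≤ ((d / g : ℕ) : ℝ) :=
          by exact_mod_cast ZMod.card_filter_dvd_val_le (Nat.dvd_of_mem_divisors hgd)
      _ ≤ d / g := Nat.cast_div_le
      _ ≤ d / X := by gcongr
  calc (#{b : ZMod d | X < (d.gcd b.val : ℝ)} : ℝ)
      ≤ ∑ g ∈ D, (#{b : ZMod d | g ∣ b.val} : ℝ) := by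
        exact_mod_cast (card_le_card hsub).trans card_biUnion_le
    _ ≤ #D * (d / X) := by simpa using sum_le_sum hmult
    _ ≤ #d.divisors * (d / X) := by gcongr; exact filter_subset _ _

lemma card_filter_sum_eq_zero_apply_le {ι A : Type*} [Fintype ι] [DecidableEq ι]
    [AddCommGroup A] [Fintype A] [DecidableEq A] (P : A → Prop) [DecidablePred P] {i j : ι}
    (hij : i ≠ j) :
    #{a : ι → A | ∑ k, a k = 0 ∧ P (a i)}
      ≤ #{b | P b} * Fintype.card A ^ (Fintype.card ι - 2) := by
  let κ := {k : ι // k ≠ i ∧ k ≠ j}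
  have hκ : Fintype.card κ = Fintype.card ι - 2 := by
    have : ({k | k ≠ i ∧ k ≠ j} : Finset ι) = univ \ {i, j} := by ext; simp
    rw [Fintype.card_subtype, this, card_sdiff_of_subset (subset_univ _), card_pair hij, card_univ]
  calc #{a : ι → A | ∑ k, a k = 0 ∧ P (a i)}
        ≤ #(({b | P b} : Finset A) ×ˢ (univ : Finset (κ → A))) := by
        -- `a j` is recovered from the other coordinates since `∑ k, a k = 0`.
        refine card_le_card_of_injOn (fun a => (a i, fun k : κ => a k)) (fun a ha => ?_)
          fun a ha b hb h => ?_
        · simp only [coe_filter, Set.mem_ofPred_eq, mem_univ, true_and] at ha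
          simp [ha.2]
        · simp only [coe_filter, Set.mem_ofPred_eq, mem_univ, true_and, Prod.mk.injEq] at ha hb h
          have hoff : ∀ k ≠ j, (a - b) k = 0 := fun k hkj => by
            by_cases hki : k = i
            · subst hki; simp [h.1]
            · simpa [sub_eq_zero] using congrFun h.2 ⟨k, hki, hkj⟩
          have hj : (a - b) j = 0 := by
            rw [← Fintype.sum_eq_single j hoff]
            simp only [Pi.sub_apply, sum_sub_distrib, ha.1, hb.1, sub_zero]
          funext k
          exact sub_eq_zero.1 <| if hkj : k = j then hkj ▸ hj else hoff k hkj
    _ = #{b | P b} * Fintype.card A ^ (Fintype.card ι - 2) := by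
        rw [card_product, card_univ, Fintype.card_fun, hκ]

lemma card_filter_sum_eq_zero_exists_apply_le {ι A : Type*} [Fintype ι] [DecidableEq ι]
    [AddCommGroup A] [Fintype A] [DecidableEq A] (P : A → Prop) [DecidablePred P]
    (hι : 1 < Fintype.card ι) :
    #{a : ι → A | ∑ k, a k = 0 ∧ ∃ i, P (a i)}
      ≤ Fintype.card ι * (#{b | P b} * Fintype.card A ^ (Fintype.card ι - 2)) := by
  have hsub : ({a : ι → A | ∑ k, a k = 0 ∧ ∃ i, P (a i)} : Finset _)
      = univ.biUnion fun i => {a : ι → A | ∑ k, a k = 0 ∧ P (a i)} := by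
    ext a; simp
  rw [hsub, ← card_univ, ← smul_eq_mul, ← sum_const]
  refine card_biUnion_le.trans (sum_le_sum fun i _ => ?_)
  obtain ⟨j, hji⟩ := Fintype.exists_ne_of_one_lt_card hι i
  exact card_filter_sum_eq_zero_apply_le P hji.symm

/-- For every `u ∈ (0,1)` there is a constant `c` (depending only on `u`) such that for all
`d ≥ 2`, with `X = d^u`, the set `G_d†(X) = {a ∈ G_d : d > maxᵢ gcd(d, aᵢ) > X}` satisfies
`|G_d†(X)| ≤ c · d^{-u/2} · |G_d|`, where `|G_d| = d³`. -/
theorem card_bad_set_le :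
    ∀ u : ℝ, u ∈ Set.Ioo (0 : ℝ) 1 → ∃ c : ℝ, 0 < c ∧ ∀ d : ℕ, 2 ≤ d →
      (Nat.card {a : Fin 4 → ZMod d // (∑ i, a i = 0) ∧
          (Finset.univ.sup (fun i => Nat.gcd d (a i).val) < d ∧
            (d : ℝ) ^ u < ((Finset.univ.sup (fun i => Nat.gcd d (a i).val) : ℕ) : ℝ))} : ℝ)
        ≤ c * (d : ℝ) ^ (-(u / 2)) * ((d : ℝ) ^ 3) := by
  rintro u ⟨hu0, -⟩
  obtain ⟨c, hc, hτ⟩ := exists_card_divisors_le_mul_rpow (half_pos hu0)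
  refine ⟨4 * c, by positivity, fun d hd => ?_⟩
  have : NeZero d := ⟨by omega⟩
  have hdR : (0 : ℝ) < d := by positivity
  rw [Nat.card_eq_fintype_card, Fintype.card_subtype]
  have hcount := card_filter_sum_eq_zero_exists_apply_le (ι := Fin 4) (A := ZMod d)
    (fun b => (d : ℝ) ^ u < (d.gcd b.val : ℝ)) (by decide)
  simp only [Fintype.card_fin, ZMod.card, Nat.reduceSub] at hcount
  calc _ ≤ (4 * (#{b : ZMod d | (d : ℝ) ^ u < (d.gcd b.val : ℝ)} * d ^ 2) : ℝ) := by
        refine mod_cast (card_le_card fun a ha => ?_).trans hcount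
        simp only [mem_filter, mem_univ, true_and] at ha ⊢
        obtain ⟨i, -, hi⟩ := exists_mem_eq_sup univ univ_nonempty fun i => d.gcd (a i).val
        exact ⟨ha.1, i, hi ▸ ha.2.2⟩
    _ ≤ 4 * ((c * (d : ℝ) ^ (u / 2)) * (d / d ^ u) * d ^ 2) := by
        gcongr
        exact (ZMod.card_filter_lt_gcd_val_le (by positivity)).trans
          (by gcongr; exact hτ d (NeZero.ne d))
    _ = 4 * c * (d : ℝ) ^ (-(u / 2)) * (d : ℝ) ^ 3 := by
        rw [show -(u / 2) = u / 2 - u by ring, rpow_sub hdR]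
        ring
end

section
/- Let q ≥ 2 and d ≥ 2 be coprime integers, and let Λ ⊆ G_d = {a ∈ (ℤ/dℤ)^4 : Σ a_i = 0} be nonempty and stable under multiplication by q. Then the number of orbits of Λ under multiplication by q satisfies |O_q(Λ)| ≤ 1 + 8 log q · |Λ| / log |Λ| when |Λ| ≥ 2. In particular |O_q(Λ)| ≪ log q · |Λ| / log |Λ| with an absolute effective constant. -/
/-!
Since `q` is a unit of finite order modulo `d`, the sets `{qⁿ a}` partition `Λ`, and the orbit
of `a` has exactly `period q a` elements. Fix a threshold `m`. At most `|Λ| / (m + 1)` orbits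
have more than `m` elements. Every other orbit consists of points `a ∈ G_d` with `q ^ ℓ • a = a`
for some `1 ≤ ℓ ≤ m`; such an `a` is killed by `q ^ ℓ - 1` and is determined by its first three
coordinates, so there are at most `q ^ (3 ℓ)` of them, and at most `(8 / 7) q ^ (3 m)` in all.
Choosing `m = ⌊log_q |Λ| / 7⌋` bounds the two counts by `7 log q |Λ| / log |Λ|` and
`log q |Λ| / log |Λ|` once `|Λ| > q ^ 8`; for `|Λ| ≤ q ^ 8` the trivial bound `|Λ|` suffices.
-/

open Finset MulAction

section PowOrbit

variable {M α : Type*} [Monoid M] [MulAction M α]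

def powOrbit (g : M) (a : α) : Set α := {b | ∃ n : ℕ, b = g ^ n • a}

variable {g : M} {a b : α}

lemma powOrbit_subset {s : Set α} (hs : ∀ x ∈ s, g • x ∈ s) (ha : a ∈ s) :
    powOrbit g a ⊆ s := by
  rintro _ ⟨n, rfl⟩
  induction n with
  | zero => simpa using ha
  | succ n ih => rw [pow_succ', mul_smul]; exact hs _ ih

lemma powOrbit_eq_image_Iio_period (hg : IsOfFinOrder g) (a : α) :
    powOrbit g a = (fun n => g ^ n • a) '' Set.Iio (period g a) := by
  ext b
  constructor
  · rintro ⟨n, rfl⟩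
    exact ⟨n % period g a, Nat.mod_lt _ (period_pos_of_orderOf_pos hg.orderOf_pos a),
      pow_mod_period_smul n⟩
  · rintro ⟨n, -, rfl⟩
    exact ⟨n, rfl⟩

lemma ncard_powOrbit (hg : IsOfFinOrder g) (a : α) : (powOrbit g a).ncard = period g a := by
  have hinj : (Set.Iio (period g a)).InjOn (fun n => g ^ n • a) := by
    simpa only [smul_iterate_apply, ← period_eq_minimalPeriod] using
      Function.iterate_injOn_Iio_minimalPeriod (f := (g • ·)) (x := a)
  rw [powOrbit_eq_image_Iio_period hg, hinj.ncard_image, Set.ncard_Iio_nat]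

lemma powOrbit_eq_of_mem (hg : IsOfFinOrder g) (hb : b ∈ powOrbit g a) :
    powOrbit g b = powOrbit g a := by
  obtain ⟨n, rfl⟩ := hb
  have hp := period_pos_of_orderOf_pos hg.orderOf_pos a
  ext c
  constructor
  · rintro ⟨k, rfl⟩
    exact ⟨k + n, by rw [pow_add, mul_smul]⟩
  · rintro ⟨k, rfl⟩
    -- `g ^ (period g a * n)` fixes `a`, so `g ^ ((period g a - 1) * n)` undoes `g ^ n`.
    refine ⟨k + (period g a - 1) * n, ?_⟩
    rw [← mul_smul, ← pow_add, add_assoc, ← add_one_mul, Nat.sub_one_add_one hp.ne', pow_add,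
      mul_smul, pow_smul_eq_iff_period_dvd.2 (dvd_mul_right _ _)]

variable [DecidableEq (Set α)] {s : Finset α}

lemma mul_card_image_powOrbit_of_lt_period_le (hg : IsOfFinOrder g) (hs : ∀ x ∈ s, g • x ∈ s)
    (m : ℕ) :
    (m + 1) * #({a ∈ s | m < period g a}.image (powOrbit g)) ≤ #s := by
  refine (mul_card_image_le_card _ _ ?_).trans (card_filter_le _ _)
  simp only [mem_image, mem_filter]
  rintro _ ⟨a, ⟨ha, hma⟩, rfl⟩
  calc m + 1 ≤ (powOrbit g a).ncard := by rw [ncard_powOrbit hg]; exact hma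
    _ ≤ #{b ∈ {a ∈ s | m < period g a} | powOrbit g b = powOrbit g a} := by
      rw [← Set.ncard_coe_finset]
      refine Set.ncard_le_ncard (fun b hb => ?_) (finite_toSet _)
      have hba := powOrbit_eq_of_mem hg hb
      simp only [coe_filter, mem_filter, Set.mem_ofPred_eq]
      refine ⟨⟨powOrbit_subset (s := (s : Set α)) hs ha hb, ?_⟩, hba⟩
      rwa [← ncard_powOrbit hg, hba, ncard_powOrbit hg]

lemma mul_card_image_powOrbit_le [DecidableEq α] (hg : IsOfFinOrder g) (hs : ∀ x ∈ s, g • x ∈ s)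
    (m : ℕ) :
    (m + 1) * #(s.image (powOrbit g)) ≤
      #s + (m + 1) * #{a ∈ s | ∃ ℓ ∈ Icc (1 : ℕ) m, g ^ ℓ • a = a} := by
  have hshort : #({a ∈ s | ¬ m < period g a}.image (powOrbit g)) ≤
      #{a ∈ s | ∃ ℓ ∈ Icc (1 : ℕ) m, g ^ ℓ • a = a} := by
    refine card_image_le.trans (card_le_card (monotone_filter_right _ fun a _ => ?_))
    exact fun ha => ⟨period g a,
      mem_Icc.2 ⟨period_pos_of_orderOf_pos hg.orderOf_pos a, not_lt.1 ha⟩, pow_period_smul g a⟩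
  calc (m + 1) * #(s.image (powOrbit g))
      ≤ (m + 1) * (#({a ∈ s | m < period g a}.image (powOrbit g)) +
          #({a ∈ s | ¬ m < period g a}.image (powOrbit g))) := by
        refine Nat.mul_le_mul_left _ (le_of_eq_of_le ?_ (card_union_le _ _))
        rw [← image_union, filter_union_filter_not_eq]
    _ ≤ _ := by
        rw [mul_add]
        exact add_le_add (mul_card_image_powOrbit_of_lt_period_le hg hs m)
          (Nat.mul_le_mul_left _ hshort)

end PowOrbit

lemma card_nsmul_eq_zero_sum_eq_zero_le {A : Type*} [AddCommGroup A] [Fintype A] [DecidableEq A]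
    [IsAddCyclic A] (n : ℕ) {k : ℕ} (hk : 0 < k) :
    #{a : Fin (n + 1) → A | k • a = 0 ∧ ∑ i, a i = 0} ≤ k ^ n := by
  have hlast : ∀ a : Fin (n + 1) → A, ∑ i, a i = 0 → a (Fin.last n) = -∑ i, Fin.init a i := by
    intro a ha
    rw [Fin.sum_univ_castSucc] at ha
    exact eq_neg_of_add_eq_zero_right ha
  calc #{a : Fin (n + 1) → A | k • a = 0 ∧ ∑ i, a i = 0}
      ≤ #(Fintype.piFinset fun _ : Fin n => ({x : A | k • x = 0} : Finset A)) := by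
        refine card_le_card_of_injOn Fin.init (fun a ha => ?_) (fun a ha b hb hab => ?_)
        · simp only [coe_filter, mem_univ, true_and, Set.mem_ofPred_eq] at ha
          rw [mem_coe, Fintype.mem_piFinset]
          exact fun i =>
            mem_filter.2 ⟨mem_univ _, by simpa [Fin.init] using congrFun ha.1 i.castSucc⟩
        · simp only [coe_filter, mem_univ, true_and, Set.mem_ofPred_eq] at ha hb
          rw [← Fin.snoc_init_self a, ← Fin.snoc_init_self b, hlast a ha.2, hlast b hb.2, hab]
    _ = #({x : A | k • x = 0} : Finset A) ^ n := by simp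
    _ ≤ k ^ n := Nat.pow_le_pow_left (IsAddCyclic.card_nsmul_eq_zero_le hk) n

lemma card_natCast_smul_eq_self_sum_eq_zero_le (d n k : ℕ) [NeZero d] (hk : 2 ≤ k) :
    #{a : Fin (n + 1) → ZMod d | (k : ZMod d) • a = a ∧ ∑ i, a i = 0} ≤ k ^ n := by
  calc #{a : Fin (n + 1) → ZMod d | (k : ZMod d) • a = a ∧ ∑ i, a i = 0}
      ≤ #{a : Fin (n + 1) → ZMod d | (k - 1) • a = 0 ∧ ∑ i, a i = 0} := by
        refine card_le_card (monotone_filter_right _ fun a _ ha => ⟨?_, ha.2⟩)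
        rw [← Nat.cast_smul_eq_nsmul (ZMod d), Nat.cast_sub (by omega), sub_smul, ha.1,
          Nat.cast_one, one_smul, sub_self]
    _ ≤ (k - 1) ^ n := card_nsmul_eq_zero_sum_eq_zero_le n (by omega)
    _ ≤ k ^ n := Nat.pow_le_pow_left (Nat.sub_le k 1) n

lemma card_filter_exists_pow_smul_eq_self_le (d n q m : ℕ) [NeZero d] (hq : 2 ≤ q)
    (s : Finset (Fin (n + 1) → ZMod d)) (hs : ∀ a ∈ s, ∑ i, a i = 0) :
    #{a ∈ s | ∃ ℓ ∈ Icc (1 : ℕ) m, (q : ZMod d) ^ ℓ • a = a} ≤ ∑ ℓ ∈ Icc 1 m, (q ^ n) ^ ℓ := by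
  calc #{a ∈ s | ∃ ℓ ∈ Icc (1 : ℕ) m, (q : ZMod d) ^ ℓ • a = a}
      ≤ #((Icc 1 m).biUnion fun ℓ =>
          {a : Fin (n + 1) → ZMod d | ((q ^ ℓ : ℕ) : ZMod d) • a = a ∧ ∑ i, a i = 0}) := by
        refine card_le_card fun a ha => ?_
        obtain ⟨has, ℓ, hℓ, hfix⟩ := mem_filter.1 ha
        exact mem_biUnion.2 ⟨ℓ, hℓ, mem_filter.2 ⟨mem_univ _, by push_cast; exact hfix, hs a has⟩⟩
    _ ≤ ∑ ℓ ∈ Icc 1 m, #{a : Fin (n + 1) → ZMod d |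
          ((q ^ ℓ : ℕ) : ZMod d) • a = a ∧ ∑ i, a i = 0} := card_biUnion_le
    _ ≤ ∑ ℓ ∈ Icc 1 m, (q ^ n) ^ ℓ := by
        refine sum_le_sum fun ℓ hℓ => ?_
        rw [← pow_mul, mul_comm, pow_mul]
        exact card_natCast_smul_eq_self_sum_eq_zero_le d n _
          (hq.trans (Nat.le_self_pow (Nat.one_le_iff_ne_zero.1 (mem_Icc.1 hℓ).1) q))

lemma seven_mul_sum_Icc_pow_le {r : ℕ} (hr : 8 ≤ r) (m : ℕ) :
    7 * ∑ ℓ ∈ Icc 1 m, r ^ ℓ ≤ 8 * r ^ m := by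
  induction m with
  | zero => simp
  | succ m ih =>
    rw [sum_Icc_succ_top (Nat.le_add_left 1 m), pow_succ]
    nlinarith [pow_pos (by omega : 0 < r) m]

lemma le_mul_log_mul_div_log {q N n : ℕ} (hN : 1 < N) (h : N ≤ q ^ n) :
    (N : ℝ) ≤ n * Real.log q * N / Real.log N := by
  have hL : 0 < Real.log N := Real.log_pos (by exact_mod_cast hN)
  have hlog : Real.log N ≤ n * Real.log q := by
    rw [← Real.log_pow]
    exact Real.log_le_log (by positivity) (by exact_mod_cast h)
  rw [le_div_iff₀ hL]
  nlinarith

lemma eight_mul_pow_mul_log_le {z N : ℝ} (hz : 0 ≤ z) (hzN : z ^ 7 ≤ N) (hN : 256 ≤ N) :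
    8 * z ^ 3 * Real.log N ≤ 7 * Real.log 2 * N := by
  set y := N ^ ((7 : ℕ)⁻¹ : ℝ)
  have hy7 : y ^ 7 = N := Real.rpow_inv_natCast_pow (by linarith) (by norm_num)
  have hy0 : 0 ≤ y := by positivity
  have hzy : z ≤ y := (pow_le_pow_iff_left₀ hz hy0 (by norm_num)).1 (hy7 ▸ hzN)
  have hy : 2.2 ≤ y := by
    by_contra! h
    have := pow_lt_pow_left₀ h hy0 (by norm_num : (7 : ℕ) ≠ 0)
    norm_num at this
    linarith
  have hlog : Real.log N ≤ 7 * (y - 1) := by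
    rw [← hy7, Real.log_pow]
    push_cast
    linarith [Real.log_le_sub_one_of_pos (by linarith : 0 < y)]
  have hlog2 : 0.6931 < Real.log 2 := by linarith [Real.log_two_gt_d9]
  have hpoly : 8 * (y - 1) ≤ Real.log 2 * y ^ 4 := by
    have hy4 : 4.84 * y ^ 2 ≤ y ^ 4 := by nlinarith [mul_le_mul hy hy (by norm_num) hy0]
    nlinarith [sq_nonneg (y - 1.2), pow_nonneg hy0 4]
  have hLpos : 0 ≤ Real.log N := Real.log_nonneg (by linarith)
  calc 8 * z ^ 3 * Real.log N ≤ 8 * y ^ 3 * (7 * (y - 1)) := by gcongr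
    _ = 7 * y ^ 3 * (8 * (y - 1)) := by ring
    _ ≤ 7 * y ^ 3 * (Real.log 2 * y ^ 4) := by gcongr
    _ = 7 * Real.log 2 * N := by rw [← hy7]; ring

lemma exists_pow_mul_le_and_le_pow_mul {q N : ℕ} (hq : 1 < q) (hN : N ≠ 0) {c : ℕ}
    (hc : 0 < c) :
    ∃ m, q ^ (c * m) ≤ N ∧ N ≤ q ^ (c * (m + 1)) :=
  ⟨Nat.log q N / c,
    (Nat.pow_le_pow_right (by omega) (Nat.mul_div_le _ _)).trans (Nat.pow_log_le_self q hN),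
    (Nat.lt_pow_succ_log_self hq N).le.trans
      (Nat.pow_le_pow_right (by omega) (Nat.lt_mul_div_succ _ hc))⟩

lemma natCast_le_eight_mul_log_mul_div_log {q N m C : ℕ} (hq : 2 ≤ q) (hN : 256 ≤ N)
    (hlow : q ^ (7 * m) ≤ N) (hup : N ≤ q ^ (7 * (m + 1)))
    (hC : 7 * (m + 1) * C ≤ 7 * N + 8 * (m + 1) * (q ^ 3) ^ m) :
    (C : ℝ) ≤ 8 * Real.log q * N / Real.log N := by
  have hL : 0 < Real.log N := Real.log_pos (by exact_mod_cast (by omega : 1 < N))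
  have hlong := le_mul_log_mul_div_log (by omega) hup
  have hshort := eight_mul_pow_mul_log_le (z := (q : ℝ) ^ m) (N := N) (by positivity)
    (by rw [← pow_mul, mul_comm]; exact_mod_cast hlow) (by exact_mod_cast hN)
  have hlq : Real.log 2 ≤ Real.log q := Real.log_le_log (by norm_num) (by exact_mod_cast hq)
  have hC' : 7 * (m + 1) * (C : ℝ) ≤ 7 * N + 8 * (m + 1) * ((q : ℝ) ^ m) ^ 3 := by
    rw [pow_right_comm]
    exact_mod_cast hC
  rw [le_div_iff₀ hL] at hlong ⊢
  push_cast at hlong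
  have : 7 * ((m : ℝ) + 1) * (C * Real.log N) ≤ 7 * ((m : ℝ) + 1) * (8 * Real.log q * N) :=
    calc 7 * ((m : ℝ) + 1) * (C * Real.log N) = (7 * (m + 1) * C) * Real.log N := by ring
      _ ≤ (7 * N + 8 * (m + 1) * ((q : ℝ) ^ m) ^ 3) * Real.log N := by gcongr
      _ = 7 * (N * Real.log N) + (m + 1) * (8 * ((q : ℝ) ^ m) ^ 3 * Real.log N) := by ring
      _ ≤ 7 * (7 * (m + 1) * Real.log q * N) + (m + 1) * (7 * Real.log q * N) := by
        gcongr 7 * ?_ + _ * ?_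
        exact hshort.trans (by gcongr)
      _ = 7 * ((m : ℝ) + 1) * (8 * Real.log q * N) := by ring
  exact le_of_mul_le_mul_left this (by positivity)

theorem card_orbits_le_general (q d : ℕ) (hq : 2 ≤ q) (hd : 2 ≤ d) (hqd : Nat.Coprime q d)
    (Λ : Set (Fin 4 → ZMod d))
    (hsub : ∀ a ∈ Λ, ∑ i, a i = 0)
    (hstab : ∀ a ∈ Λ, (fun i => (q : ZMod d) * a i) ∈ Λ)
    (hcard : 2 ≤ Nat.card Λ) :
    (Nat.card {S : Set (Fin 4 → ZMod d) |
        ∃ a ∈ Λ, S = {b | ∃ n : ℕ, b = fun i => (q : ZMod d) ^ n * a i}} : ℝ)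
      ≤ 1 + 8 * Real.log q * (Nat.card Λ : ℝ) / Real.log (Nat.card Λ) := by
  classical
  have : NeZero d := ⟨by omega⟩
  obtain ⟨s, rfl⟩ : ∃ s : Finset (Fin 4 → ZMod d), ↑s = Λ := ⟨Λ.toFinite.toFinset, by simp⟩
  have horbits : {S : Set (Fin 4 → ZMod d) | ∃ a ∈ (s : Set (Fin 4 → ZMod d)),
      S = {b | ∃ n : ℕ, b = fun i => (q : ZMod d) ^ n * a i}} =
        s.image (powOrbit (q : ZMod d)) := by
    ext S
    simp only [coe_image, Set.mem_image, mem_coe]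
    exact exists_congr fun a => and_congr_right fun _ => eq_comm
  rw [horbits, Nat.card_coe_set_eq, Set.ncard_coe_finset]
  rw [Nat.card_coe_set_eq, Set.ncard_coe_finset] at hcard ⊢
  have hg : IsOfFinOrder (q : ZMod d) := ((ZMod.isUnit_iff_coprime q d).2 hqd).isOfFinOrder
  rcases le_or_gt #s (q ^ 8) with hsmall | hlarge
  · have hle : (#(s.image (powOrbit (q : ZMod d))) : ℝ) ≤ #s := by exact_mod_cast card_image_le
    have := le_mul_log_mul_div_log hcard hsmall
    push_cast at this
    linarith
  · obtain ⟨m, hlow, hup⟩ :=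
      exists_pow_mul_le_and_le_pow_mul (q := q) (N := #s) (c := 7) hq (by omega) (by norm_num)
    have hperiodic : 7 * #{a ∈ s | ∃ ℓ ∈ Icc (1 : ℕ) m, (q : ZMod d) ^ ℓ • a = a} ≤
        8 * (q ^ 3) ^ m :=
      (Nat.mul_le_mul_left 7 (card_filter_exists_pow_smul_eq_self_le d 3 q m hq s hsub)).trans
        (seven_mul_sum_Icc_pow_le (by simpa using Nat.pow_le_pow_left hq 3) m)
    have hcount := mul_card_image_powOrbit_le hg hstab m
    refine (natCast_le_eight_mul_log_mul_div_log hq ?_ hlow hup ?_).trans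
      (le_add_of_nonneg_left zero_le_one)
    · simpa using (Nat.pow_le_pow_left hq 8).trans hlarge.le
    · linarith [Nat.mul_le_mul_left (m + 1) hperiodic]

/-- Let `q, d ≥ 2` be coprime and `Λ ⊆ G_d = {a ∈ (ℤ/dℤ)^4 : Σ aᵢ = 0}` nonempty and stable
under multiplication by `q`, with `|Λ| ≥ 2`. Then the number of orbits of `Λ` under
multiplication by `q` satisfies `|O_q(Λ)| ≤ 1 + 8 log q · |Λ| / log |Λ|`. -/
theorem card_orbits_le (q d : ℕ) (hq : 2 ≤ q) (hd : 2 ≤ d) (hqd : Nat.Coprime q d)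
    (Λ : Set (Fin 4 → ZMod d)) (hne : Λ.Nonempty)
    (hsub : ∀ a ∈ Λ, ∑ i, a i = 0)
    (hstab : ∀ a ∈ Λ, (fun i => (q : ZMod d) * a i) ∈ Λ)
    (hcard : 2 ≤ Nat.card Λ) :
    (Nat.card {S : Set (Fin 4 → ZMod d) |
        ∃ a ∈ Λ, S = {b | ∃ n : ℕ, b = fun i => (q : ZMod d) ^ n * a i}} : ℝ)
      ≤ 1 + 8 * Real.log q * (Nat.card Λ : ℝ) / Real.log (Nat.card Λ) :=
  card_orbits_le_general q d hq hd hqd Λ hsub hstab hcard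
end

section
/- Let q ≥ 2 and d ≥ 2 be coprime integers, and let Λ ⊆ G_d = {a ∈ (ℤ/dℤ)^4 : Σ a_i = 0} be nonempty and stable under multiplication by q. Then Σ_{A ∈ O_q(Λ)} log |A| ≪ log q · |Λ| · log log |Λ| / log |Λ| (for |Λ| large), with an absolute effective constant (one may take the constant ≤ 18). -/
set_option linter.unusedSectionVars false

open Real Finset

namespace SumLogOrbitAux

variable {d : ℕ} (q : ℕ)

/-- multiplication by `q^n` coordinatewise. -/
def mulQ (a : Fin 4 → ZMod d) (n : ℕ) : Fin 4 → ZMod d := fun i => (q : ZMod d) ^ n * a i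

lemma mulQ_zero (a : Fin 4 → ZMod d) : mulQ q a 0 = a := by
  funext i; simp [mulQ]

lemma mulQ_add (a : Fin 4 → ZMod d) (n l : ℕ) :
    mulQ q a (n + l) = mulQ q (mulQ q a l) n := by
  funext i; simp only [mulQ, pow_add]; ring

/-- the orbit of `a` under multiplication by `q`. -/
def orbQ (a : Fin 4 → ZMod d) : Set (Fin 4 → ZMod d) := {b | ∃ n : ℕ, b = mulQ q a n}

lemma self_mem_orbQ (a : Fin 4 → ZMod d) : a ∈ orbQ q a := ⟨0, (mulQ_zero q a).symm⟩

variable [NeZero d]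

omit [NeZero d] in
lemma isUnit_q (hco : Nat.Coprime q d) : IsUnit ((q : ZMod d)) := by
  have := (ZMod.unitOfCoprime q hco).isUnit
  rwa [ZMod.coe_unitOfCoprime] at this

lemma mulQ_cancel (hco : Nat.Coprime q d) {a b : Fin 4 → ZMod d} {s : ℕ} (h : mulQ q a s = mulQ q b s) : a = b := by
  funext i
  exact ((isUnit_q q hco).pow s).mul_left_cancel (congrFun h i)

lemma periodExists (hco : Nat.Coprime q d) (a : Fin 4 → ZMod d) : ∃ m, 0 < m ∧ mulQ q a m = a := by
  refine ⟨orderOf (ZMod.unitOfCoprime q hco), orderOf_pos _, ?_⟩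
  funext i
  have h1 : ((ZMod.unitOfCoprime q hco : (ZMod d)ˣ) : ZMod d) ^
      orderOf (ZMod.unitOfCoprime q hco) = 1 := by
    rw [← Units.val_pow_eq_pow_val, pow_orderOf_eq_one]; rfl
  rw [ZMod.coe_unitOfCoprime] at h1
  simp [mulQ, h1]

/-- the period of `a`. -/
def P (hco : Nat.Coprime q d) (a : Fin 4 → ZMod d) : ℕ := Nat.find (periodExists q hco a)

lemma P_pos (hco : Nat.Coprime q d) (a : Fin 4 → ZMod d) : 0 < P q hco a := (Nat.find_spec (periodExists q hco a)).1

lemma mulQ_P (hco : Nat.Coprime q d) (a : Fin 4 → ZMod d) : mulQ q a (P q hco a) = a :=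
  (Nat.find_spec (periodExists q hco a)).2

lemma mulQ_add_P (hco : Nat.Coprime q d) (a : Fin 4 → ZMod d) (m : ℕ) :
    mulQ q a (m + P q hco a) = mulQ q a m := by
  rw [mulQ_add, mulQ_P]

lemma mulQ_add_mul_P (hco : Nat.Coprime q d) (a : Fin 4 → ZMod d) (r s : ℕ) :
    mulQ q a (r + P q hco a * s) = mulQ q a r := by
  induction s with
  | zero => simp
  | succ s ih =>
    have : r + P q hco a * (s + 1) = (r + P q hco a * s) + P q hco a := by ring
    rw [this, mulQ_add_P, ih]

lemma mulQ_mod (hco : Nat.Coprime q d) (a : Fin 4 → ZMod d) (n : ℕ) :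
    mulQ q a n = mulQ q a (n % P q hco a) := by
  conv_lhs => rw [← Nat.mod_add_div n (P q hco a), mulQ_add_mul_P]

lemma orbQ_eq_image (hco : Nat.Coprime q d) (a : Fin 4 → ZMod d) :
    orbQ q a = ↑((range (P q hco a)).image (mulQ q a)) := by
  ext b
  simp only [orbQ, Set.mem_setOf_eq, coe_image, Set.mem_image, mem_coe, mem_range]
  constructor
  · rintro ⟨n, rfl⟩
    exact ⟨n % P q hco a, Nat.mod_lt _ (P_pos q hco a), (mulQ_mod q hco a n).symm⟩
  · rintro ⟨n, -, rfl⟩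
    exact ⟨n, rfl⟩

lemma injOn_mulQ (hco : Nat.Coprime q d) (a : Fin 4 → ZMod d) :
    Set.InjOn (mulQ q a) ↑(range (P q hco a)) := by
  have key : ∀ i j : ℕ, i < P q hco a → j < P q hco a → i ≤ j →
      mulQ q a i = mulQ q a j → i = j := by
    intro i j hi hj hij h
    by_contra hne
    have hlt : 0 < j - i := by omega
    have hji : i + (j - i) = j := by omega
    have h2 : mulQ q a j = mulQ q (mulQ q a (j - i)) i := by
      rw [← mulQ_add, hji]
    have h3 : mulQ q a i = mulQ q (mulQ q a (j - i)) i := h.trans h2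
    have h4 : a = mulQ q a (j - i) := by
      have := mulQ_cancel q hco (a := a) (b := mulQ q a (j - i)) (s := i) ?_
      · exact this
      · exact h3
    have h5 := Nat.find_min (periodExists q hco a) (m := j - i)
      (show j - i < P q hco a by omega)
    exact h5 ⟨hlt, h4.symm⟩
  intro i hi j hj h
  simp only [coe_range, Set.mem_Iio] at hi hj
  rcases le_total i j with hle | hle
  · exact key i j hi hj hle h
  · exact (key j i hj hi hle h.symm).symm

lemma card_orbQ (hco : Nat.Coprime q d) (a : Fin 4 → ZMod d) : Nat.card (orbQ q a) = P q hco a := by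
  rw [orbQ_eq_image q hco a, Nat.card_coe_set_eq, Set.ncard_coe_finset,
    Finset.card_image_of_injOn (injOn_mulQ q hco a), card_range]

lemma periodic_mem (hco : Nat.Coprime q d) {a b : Fin 4 → ZMod d} (hb : b ∈ orbQ q a) :
    mulQ q b (P q hco a) = b := by
  obtain ⟨n, rfl⟩ := hb
  rw [← mulQ_add, add_comm, mulQ_add_P]

lemma orbQ_eq_of_mem (hco : Nat.Coprime q d) {a b : Fin 4 → ZMod d} (hb : b ∈ orbQ q a) :
    orbQ q b = orbQ q a := by
  obtain ⟨n, rfl⟩ := hb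
  ext x
  constructor
  · rintro ⟨s, rfl⟩
    exact ⟨s + n, by rw [mulQ_add]⟩
  · rintro ⟨s, rfl⟩
    have ha : a = mulQ q (mulQ q a n) (P q hco a * n - n) := by
      have h1 : mulQ q a (0 + P q hco a * n) = mulQ q a 0 := mulQ_add_mul_P q hco a 0 n
      rw [mulQ_zero] at h1
      simp only [zero_add] at h1
      have h2 : P q hco a * n = (P q hco a * n - n) + n := by
        have := P_pos q hco a
        have : n ≤ P q hco a * n := Nat.le_mul_of_pos_left n this
        omega
      rw [h2, mulQ_add] at h1
      exact h1.symm
    refine ⟨s + (P q hco a * n - n), ?_⟩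
    rw [mulQ_add, ← ha]



lemma card_k1 {q m : ℕ} (hq : 2 ≤ q) (hm : 1 ≤ m) :
    Nat.card {y : ZMod d | (q : ZMod d) ^ m * y = y} ≤ q ^ m - 1 := by
  set N := q ^ m - 1 with hN
  have hqm : 2 ≤ q ^ m := le_trans hq (Nat.le_self_pow (by omega) q)
  have hN1 : 1 ≤ N := by omega
  have hdvd : ∀ y : ZMod d, (q : ZMod d) ^ m * y = y → d ∣ N * y.val := by
    intro y hy
    have h1 : ((N * y.val : ℕ) : ZMod d) = 0 := by
      push_cast
      rw [ZMod.natCast_zmod_val]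
      have hcast : ((N : ℕ) : ZMod d) = (q : ZMod d) ^ m - 1 := by
        rw [hN]
        push_cast [Nat.cast_sub (by omega : 1 ≤ q ^ m)]
        ring
      rw [hcast, sub_mul, one_mul, hy, sub_self]
    exact (ZMod.natCast_eq_zero_iff _ d).mp h1
  have hd0 : 0 < d := Nat.pos_of_ne_zero (NeZero.ne d)
  set f : {y : ZMod d | (q : ZMod d) ^ m * y = y} → Fin N := fun y =>
    ⟨N * (y : ZMod d).val / d, by
      rw [Nat.div_lt_iff_lt_mul hd0]
      have h := ZMod.val_lt (y : ZMod d)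
      have : N * (y : ZMod d).val < N * d := by
        exact mul_lt_mul_of_pos_left h (by omega)
      exact this⟩ with hf
  have hinj : Function.Injective f := by
    intro y z hyz
    have h1 : N * (y : ZMod d).val / d = N * (z : ZMod d).val / d := by
      simpa [hf] using congrArg (fun t : Fin N => (t : ℕ)) hyz
    have h2 : N * (y : ZMod d).val = N * (z : ZMod d).val := by
      have e1 := Nat.div_mul_cancel (hdvd _ y.2)
      have e2 := Nat.div_mul_cancel (hdvd _ z.2)
      rw [← e1, ← e2, h1]
    have h3 : (y : ZMod d).val = (z : ZMod d).val := Nat.eq_of_mul_eq_mul_left (by omega) h2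
    exact Subtype.ext (ZMod.val_injective d h3)
  calc Nat.card {y : ZMod d | (q : ZMod d) ^ m * y = y} ≤ Nat.card (Fin N) :=
        Nat.card_le_card_of_injective f hinj
    _ = N := by simp

lemma card_K {m : ℕ} (hq : 2 ≤ q) (hm : 1 ≤ m) :
    Nat.card {x : Fin 4 → ZMod d | mulQ q x m = x} ≤ (q ^ 4) ^ m := by
  set k1 := {y : ZMod d | (q : ZMod d) ^ m * y = y} with hk1
  set g : {x : Fin 4 → ZMod d | mulQ q x m = x} → (Fin 4 → k1) := fun x i =>
    ⟨(x : Fin 4 → ZMod d) i, congrFun x.2 i⟩ with hg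
  have hinj : Function.Injective g := by
    intro x y hxy
    refine Subtype.ext (funext fun i => ?_)
    exact congrArg Subtype.val (congrFun hxy i)
  have h1 : Nat.card {x : Fin 4 → ZMod d | mulQ q x m = x} ≤ Nat.card (Fin 4 → k1) :=
    Nat.card_le_card_of_injective g hinj
  have h2 : Nat.card (Fin 4 → k1) = Nat.card k1 ^ 4 := by
    rw [Nat.card_fun]
    simp
  have h3 : Nat.card k1 ≤ q ^ m - 1 := card_k1 hq hm
  calc Nat.card {x : Fin 4 → ZMod d | mulQ q x m = x} ≤ Nat.card k1 ^ 4 := h2 ▸ h1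
    _ ≤ (q ^ m) ^ 4 := Nat.pow_le_pow_left (le_trans h3 (by omega)) 4
    _ = (q ^ 4) ^ m := by rw [← pow_mul, ← pow_mul, mul_comm]

lemma geom_sum_le (r : ℕ) (hr : 2 ≤ r) (Y : ℕ) : ∑ m ∈ Icc 1 Y, r ^ m ≤ 2 * r ^ Y := by
  induction Y with
  | zero => simp
  | succ Y ih =>
    rw [Finset.sum_Icc_succ_top (by omega)]
    have h1 : 2 * r ^ Y ≤ r ^ (Y + 1) := by
      rw [pow_succ]
      calc 2 * r ^ Y ≤ r * r ^ Y := Nat.mul_le_mul_right _ hr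
        _ = r ^ Y * r := Nat.mul_comm _ _
    omega

lemma log_le_div_exp {x : ℝ} (hx : 0 < x) : Real.log x ≤ x / Real.exp 1 := by
  have h1 : Real.log (x / Real.exp 1) ≤ x / Real.exp 1 - 1 :=
    Real.log_le_sub_one_of_pos (by positivity)
  rw [Real.log_div (ne_of_gt hx) (ne_of_gt (Real.exp_pos 1)), Real.log_exp] at h1
  linarith


end SumLogOrbitAux
set_option maxHeartbeats 1000000 in
/-- There is an absolute effective constant `c ≤ 18` such that for all coprime `q, d ≥ 2` and
every nonempty `Λ ⊆ G_d = {a ∈ (ℤ/dℤ)^4 : Σ aᵢ = 0}` stable under multiplication by `q`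
(with `|Λ|` large, say `|Λ| ≥ 3`), one has
`Σ_{A ∈ O_q(Λ)} log |A| ≤ c · log q · |Λ| · log log |Λ| / log |Λ|`. -/
theorem sum_log_orbit_card_le :
    ∃ c : ℝ, 0 < c ∧ c ≤ 18 ∧
      ∀ (q d : ℕ), 2 ≤ q → 2 ≤ d → Nat.Coprime q d →
      ∀ (Λ : Set (Fin 4 → ZMod d)), Λ.Nonempty →
        (∀ a ∈ Λ, ∑ i, a i = 0) →
        (∀ a ∈ Λ, (fun i => (q : ZMod d) * a i) ∈ Λ) →
        3 ≤ Nat.card Λ →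
        ∑ᶠ A ∈ {S : Set (Fin 4 → ZMod d) |
            ∃ a ∈ Λ, S = {b | ∃ n : ℕ, b = fun i => (q : ZMod d) ^ n * a i}},
          Real.log (Nat.card A)
        ≤ c * Real.log q * (Nat.card Λ : ℝ) *
            Real.log (Real.log (Nat.card Λ)) / Real.log (Nat.card Λ) := by
  classical
  refine ⟨18, by norm_num, le_refl _, ?_⟩
  intro q d hq hd hco Λ hne hsum0 hstab hcard3
  haveI : NeZero d := ⟨by omega⟩
  set O : Set (Set (Fin 4 → ZMod d)) :=
    {S | ∃ a ∈ Λ, S = {b | ∃ n : ℕ, b = fun i => (q : ZMod d) ^ n * a i}} with hO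
  have hOfin : O.Finite := Set.toFinite _
  rw [finsum_mem_eq_finite_toFinset_sum _ hOfin]
  set T := hOfin.toFinset with hT
  have hmem : ∀ A ∈ T, ∃ a ∈ Λ, A = SumLogOrbitAux.orbQ q a := by
    intro A hA
    rw [hT, Set.Finite.mem_toFinset] at hA
    obtain ⟨a, ha, rfl⟩ := hA
    exact ⟨a, ha, rfl⟩
  have hstab' : ∀ a ∈ Λ, ∀ n, SumLogOrbitAux.mulQ q a n ∈ Λ := by
    intro a ha n
    induction n with
    | zero => rw [SumLogOrbitAux.mulQ_zero]; exact ha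
    | succ n ih =>
      have h2 := hstab _ ih
      have h3 : SumLogOrbitAux.mulQ q a (n + 1)
          = fun i => (q : ZMod d) * SumLogOrbitAux.mulQ q a n i := by
        funext i; simp only [SumLogOrbitAux.mulQ, pow_succ]; ring
      rw [h3]; exact h2
  have hsub : ∀ A ∈ T, A ⊆ Λ := by
    intro A hA
    obtain ⟨a, ha, rfl⟩ := hmem A hA
    rintro b ⟨n, rfl⟩
    exact hstab' a ha n
  have hcard1 : ∀ A ∈ T, 1 ≤ Nat.card A := by
    intro A hA
    obtain ⟨a, ha, rfl⟩ := hmem A hA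
    rw [SumLogOrbitAux.card_orbQ q hco]
    exact SumLogOrbitAux.P_pos q hco a
  have hneA : ∀ A ∈ T, A.Nonempty := by
    intro A hA
    obtain ⟨a, ha, rfl⟩ := hmem A hA
    exact ⟨a, SumLogOrbitAux.self_mem_orbQ q a⟩
  have hper : ∀ A ∈ T, ∀ b ∈ A, SumLogOrbitAux.mulQ q b (Nat.card A) = b := by
    intro A hA
    obtain ⟨a, ha, rfl⟩ := hmem A hA
    intro b hb
    rw [SumLogOrbitAux.card_orbQ q hco]
    exact SumLogOrbitAux.periodic_mem q hco hb
  have hdisj : ∀ A ∈ T, ∀ B ∈ T, A ≠ B → Disjoint A B := by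
    intro A hA B hB hAB
    obtain ⟨a, ha, rfl⟩ := hmem A hA
    obtain ⟨b, hb, rfl⟩ := hmem B hB
    rw [Set.disjoint_left]
    intro x hxA hxB
    exact hAB ((SumLogOrbitAux.orbQ_eq_of_mem q hco hxA).symm.trans
      (SumLogOrbitAux.orbQ_eq_of_mem q hco hxB))
  -- sum of cards
  have hcardF : ∀ A : Set (Fin 4 → ZMod d), (Set.toFinite A).toFinset.card = Nat.card A := by
    intro A
    rw [Nat.card_coe_set_eq, Set.ncard_eq_toFinset_card A (Set.toFinite A)]
  have hsumcard : ∑ A ∈ T, Nat.card A ≤ Nat.card Λ := by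
    have hdisjF : ∀ A ∈ T, ∀ B ∈ T, A ≠ B →
        Disjoint (Set.toFinite A).toFinset (Set.toFinite B).toFinset := by
      intro A hA B hB hAB
      rw [Set.Finite.disjoint_toFinset]
      exact hdisj A hA B hB hAB
    have hsubF : T.biUnion (fun A => (Set.toFinite A).toFinset) ⊆ (Set.toFinite Λ).toFinset := by
      intro x hx
      rw [Finset.mem_biUnion] at hx
      obtain ⟨A, hA, hxA⟩ := hx
      rw [Set.Finite.mem_toFinset] at hxA ⊢
      exact hsub A hA hxA
    calc ∑ A ∈ T, Nat.card A = ∑ A ∈ T, (Set.toFinite A).toFinset.card :=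
          Finset.sum_congr rfl fun A _ => (hcardF A).symm
      _ = (T.biUnion (fun A => (Set.toFinite A).toFinset)).card :=
          (Finset.card_biUnion hdisjF).symm
      _ ≤ (Set.toFinite Λ).toFinset.card := Finset.card_le_card hsubF
      _ = Nat.card Λ := hcardF Λ
  -- real setup
  set n := Nat.card Λ with hn
  set nR : ℝ := (n : ℝ) with hnR
  have hn3 : (3 : ℝ) ≤ nR := by rw [hnR]; exact_mod_cast hcard3
  have hnR0 : (0 : ℝ) < nR := by linarith
  set L := Real.log nR with hL
  set LL := Real.log L with hLL
  have hePos := Real.exp_pos 1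
  have heLt : Real.exp 1 < 2.7182818286 := Real.exp_one_lt_d9
  have heGt : (2.7182818283 : ℝ) < Real.exp 1 := Real.exp_one_gt_d9
  have hlog2 : (0.6931471803 : ℝ) < Real.log 2 := Real.log_two_gt_d9
  have hlog3 : (2 : ℝ) - Real.exp 1 / 3 ≤ Real.log 3 := by
    have h1 : (0 : ℝ) < 3 / Real.exp 1 := by positivity
    have h2 := Real.one_sub_inv_le_log_of_pos h1
    rw [Real.log_div (by norm_num) (ne_of_gt hePos), Real.log_exp] at h2
    have h3 : ((3 : ℝ) / Real.exp 1)⁻¹ = Real.exp 1 / 3 := by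
      rw [inv_div]
    rw [h3] at h2
    linarith
  have hLlog3 : Real.log 3 ≤ L := Real.log_le_log (by norm_num) hn3
  have hL1 : 1 < L := by nlinarith
  have hL0 : (0 : ℝ) < L := by linarith
  have hLL0 : (0 : ℝ) < LL := Real.log_pos hL1
  have hqR : (2 : ℝ) ≤ (q : ℝ) := by exact_mod_cast hq
  have hlogq : Real.log 2 ≤ Real.log q := Real.log_le_log (by norm_num) hqR
  have hlogq0 : (0 : ℝ) < Real.log q := by linarith
  have hsumcardR : ∑ A ∈ T, (Nat.card A : ℝ) ≤ nR := by
    rw [hnR, hn]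
    exact_mod_cast hsumcard
  -- trivial bound
  have htriv : ∑ A ∈ T, Real.log (Nat.card A) ≤ nR / Real.exp 1 := by
    calc ∑ A ∈ T, Real.log (Nat.card A) ≤ ∑ A ∈ T, (Nat.card A : ℝ) / Real.exp 1 := by
          refine Finset.sum_le_sum fun A hA => ?_
          exact SumLogOrbitAux.log_le_div_exp (by exact_mod_cast hcard1 A hA)
      _ = (∑ A ∈ T, (Nat.card A : ℝ)) / Real.exp 1 := by rw [Finset.sum_div]
      _ ≤ nR / Real.exp 1 := by gcongr
  have hRHSgoal : ∀ X : ℝ, X ≤ 18 * Real.log q * nR * LL / L →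
      X ≤ 18 * Real.log q * nR * LL / L := fun X h => h
  -- case split on the floor threshold
  set Y := ⌊L / (8 * Real.log q)⌋₊ with hY
  rcases lt_or_ge Y 3 with hY3 | hY3
  · -- small threshold: trivial bound suffices
    have hL24 : L < 24 * Real.log q := by
      have h1 : L / (8 * Real.log q) < 3 := by
        have := (Nat.floor_lt (by positivity : (0:ℝ) ≤ L / (8 * Real.log q))).mp
          (by exact_mod_cast hY3)
        exact_mod_cast this
      have h2 : L = L / (8 * Real.log q) * (8 * Real.log q) := by field_simp
      nlinarith
    refine le_trans htriv ?_
    rw [div_le_div_iff₀ hePos hL0]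
    rcases le_or_gt (1/2 : ℝ) LL with hLLhalf | hLLhalf
    · -- LL ≥ 1/2
      have k2 : (4/3 : ℝ) ≤ LL * Real.exp 1 := by nlinarith
      have h18A : (0:ℝ) < 18 * (Real.log q * nR) := by positivity
      nlinarith [mul_le_mul_of_nonneg_left k2 h18A.le,
        mul_le_mul_of_nonneg_left hL24.le (le_of_lt hnR0)]
    · -- LL < 1/2, so L < 1.6489
      have hexp2 : Real.exp (1/2) * Real.exp (1/2) = Real.exp 1 := by
        rw [← Real.exp_add]; norm_num
      have h4 : Real.exp (1/2) < 1.6489 := by nlinarith [Real.exp_pos (1/2)]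
      have hLexp : L = Real.exp LL := by rw [hLL, Real.exp_log hL0]
      have hLlt : L < 1.6489 := by
        rw [hLexp]
        calc Real.exp LL < Real.exp (1/2) := Real.exp_lt_exp.mpr hLLhalf
          _ < 1.6489 := h4
      have hLlb : (1.0939060571 : ℝ) ≤ L := by nlinarith
      have hLLlb : (0.0858 : ℝ) ≤ LL := by
        have h1 := Real.one_sub_inv_le_log_of_pos hL0
        have h2 : L⁻¹ ≤ (1.0939060571 : ℝ)⁻¹ := by
          apply inv_anti₀ (by norm_num) hLlb
        have h3 : ((1.0939060571 : ℝ))⁻¹ ≤ 0.9142 := by norm_num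
        rw [← hLL] at h1
        linarith
      have m1 : (12.476 : ℝ) ≤ 18 * Real.log q := by linarith
      have m2 : (1.0704 : ℝ) ≤ 18 * Real.log q * LL := by nlinarith
      have m3 : (2.9 : ℝ) ≤ 18 * Real.log q * LL * Real.exp 1 := by nlinarith
      nlinarith [mul_le_mul_of_nonneg_left m3 (le_of_lt hnR0)]
  · -- main threshold case : Y ≥ 3
    set Y0 := L / (8 * Real.log q) with hY0
    have hY0pos : (0:ℝ) < Y0 := by positivity
    have hYle : (Y : ℝ) ≤ Y0 := Nat.floor_le hY0pos.le
    have hY03 : (3 : ℝ) ≤ Y0 := le_trans (by exact_mod_cast hY3) hYle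
    have hY0ltY1 : Y0 < (Y : ℝ) + 1 := Nat.lt_floor_add_one Y0
    have hY0L : Y0 ≤ L := by
      rw [hY0, div_le_iff₀ (by positivity)]
      nlinarith
    have heY0 : Real.exp 1 ≤ Y0 := by linarith
    rw [← Finset.sum_filter_add_sum_filter_not T (fun A : Set (Fin 4 → ZMod d) => Nat.card A ≤ Y)]
    -- large orbits
    have hlarge : ∑ A ∈ T.filter (fun A : Set (Fin 4 → ZMod d) => ¬ Nat.card A ≤ Y), Real.log (Nat.card A)
        ≤ LL * (8 * Real.log q) / L * nR := by
      have hterm : ∀ A ∈ T.filter (fun A : Set (Fin 4 → ZMod d) => ¬ Nat.card A ≤ Y),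
          Real.log (Nat.card A) ≤ LL * (8 * Real.log q) / L * (Nat.card A : ℝ) := by
        intro A hA
        rw [Finset.mem_filter] at hA
        obtain ⟨hAT, hAcard⟩ := hA
        have hx1 : (Y : ℝ) + 1 ≤ (Nat.card A : ℝ) := by
          exact_mod_cast (show Y + 1 ≤ Nat.card A by omega)
        have hx0 : Y0 ≤ (Nat.card A : ℝ) := by linarith
        have hxe : Real.exp 1 ≤ (Nat.card A : ℝ) := le_trans heY0 hx0
        have hxpos : (0:ℝ) < (Nat.card A : ℝ) := by linarith
        have hanti := Real.log_div_self_antitoneOn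
          (by exact heY0 : Y0 ∈ {x : ℝ | Real.exp 1 ≤ x})
          (by exact hxe : (Nat.card A : ℝ) ∈ {x : ℝ | Real.exp 1 ≤ x}) hx0
        simp only at hanti
        have hlogY0 : Real.log Y0 ≤ LL := Real.log_le_log hY0pos hY0L
        calc Real.log (Nat.card A)
            = Real.log (Nat.card A) / (Nat.card A : ℝ) * (Nat.card A : ℝ) := by
              rw [div_mul_cancel₀ _ (ne_of_gt hxpos)]
          _ ≤ Real.log Y0 / Y0 * (Nat.card A : ℝ) :=
              mul_le_mul_of_nonneg_right hanti hxpos.le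
          _ ≤ LL / Y0 * (Nat.card A : ℝ) := by
              have : Real.log Y0 / Y0 ≤ LL / Y0 := by gcongr
              exact mul_le_mul_of_nonneg_right this hxpos.le
          _ = LL * (8 * Real.log q) / L * (Nat.card A : ℝ) := by
              rw [hY0, div_div_eq_mul_div]
      calc ∑ A ∈ T.filter (fun A : Set (Fin 4 → ZMod d) => ¬ Nat.card A ≤ Y), Real.log (Nat.card A)
          ≤ ∑ A ∈ T.filter (fun A : Set (Fin 4 → ZMod d) => ¬ Nat.card A ≤ Y),
              LL * (8 * Real.log q) / L * (Nat.card A : ℝ) := Finset.sum_le_sum hterm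
        _ = LL * (8 * Real.log q) / L *
              ∑ A ∈ T.filter (fun A : Set (Fin 4 → ZMod d) => ¬ Nat.card A ≤ Y), (Nat.card A : ℝ) := by
            rw [Finset.mul_sum]
        _ ≤ LL * (8 * Real.log q) / L * nR := by
            apply mul_le_mul_of_nonneg_left ?_ (by positivity)
            calc ∑ A ∈ T.filter (fun A : Set (Fin 4 → ZMod d) => ¬ Nat.card A ≤ Y), (Nat.card A : ℝ)
                ≤ ∑ A ∈ T, (Nat.card A : ℝ) :=
                  Finset.sum_le_sum_of_subset_of_nonneg (Finset.filter_subset _ _)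
                    (fun A _ _ => by positivity)
              _ ≤ nR := hsumcardR
    -- small orbits
    have hsmall : ∑ A ∈ T.filter (fun A : Set (Fin 4 → ZMod d) => Nat.card A ≤ Y), Real.log (Nat.card A)
        ≤ 2 * Real.exp (L/2) * LL := by
      have hterm : ∀ A ∈ T.filter (fun A : Set (Fin 4 → ZMod d) => Nat.card A ≤ Y), Real.log (Nat.card A) ≤ LL := by
        intro A hA
        rw [Finset.mem_filter] at hA
        have h1 : (Nat.card A : ℝ) ≤ (Y : ℝ) := by exact_mod_cast hA.2
        have h2 : (0:ℝ) < (Nat.card A : ℝ) := by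
          exact_mod_cast hcard1 A hA.1
        calc Real.log (Nat.card A) ≤ Real.log Y0 := Real.log_le_log h2 (by linarith)
          _ ≤ LL := Real.log_le_log hY0pos hY0L
      have hrep : (T.filter (fun A : Set (Fin 4 → ZMod d) => Nat.card A ≤ Y)).card ≤ 2 * (q ^ 4) ^ Y := by
        set f : Set (Fin 4 → ZMod d) → (Fin 4 → ZMod d) := fun A =>
          if h : A.Nonempty then h.choose else (fun _ => 0) with hf
        have hfmem : ∀ A ∈ T, f A ∈ A := by
          intro A hA
          have hAne := hneA A hA
          rw [hf]
          simp only [dif_pos hAne]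
          exact hAne.choose_spec
        set BF : Finset (Fin 4 → ZMod d) := (Finset.Icc 1 Y).biUnion
          (fun m => (Set.toFinite {x : Fin 4 → ZMod d | SumLogOrbitAux.mulQ q x m = x}).toFinset)
          with hBF
        have hmapsto : ∀ A ∈ T.filter (fun A : Set (Fin 4 → ZMod d) => Nat.card A ≤ Y), f A ∈ BF := by
          intro A hA
          rw [Finset.mem_filter] at hA
          obtain ⟨hAT, hAY⟩ := hA
          rw [hBF, Finset.mem_biUnion]
          refine ⟨Nat.card A, ?_, ?_⟩
          · rw [Finset.mem_Icc]; exact ⟨hcard1 A hAT, hAY⟩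
          · rw [Set.Finite.mem_toFinset]
            exact hper A hAT (f A) (hfmem A hAT)
        have hinj : Set.InjOn f ↑(T.filter (fun A : Set (Fin 4 → ZMod d) => Nat.card A ≤ Y)) := by
          intro A hA B hB hfeq
          rw [Finset.mem_coe, Finset.mem_filter] at hA hB
          by_contra hne'
          have hdAB := hdisj A hA.1 B hB.1 hne'
          have hfA := hfmem A hA.1
          have hfB := hfmem B hB.1
          rw [hfeq] at hfA
          exact (Set.disjoint_left.mp hdAB hfA) hfB
        have h1 : (T.filter (fun A : Set (Fin 4 → ZMod d) => Nat.card A ≤ Y)).card ≤ BF.card :=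
          Finset.card_le_card_of_injOn f hmapsto hinj
        have h2 : BF.card ≤ ∑ m ∈ Finset.Icc 1 Y,
            Nat.card {x : Fin 4 → ZMod d | SumLogOrbitAux.mulQ q x m = x} := by
          refine le_trans Finset.card_biUnion_le ?_
          exact Finset.sum_le_sum fun m _ => le_of_eq (hcardF _)
        have h3 : ∑ m ∈ Finset.Icc 1 Y,
            Nat.card {x : Fin 4 → ZMod d | SumLogOrbitAux.mulQ q x m = x}
            ≤ ∑ m ∈ Finset.Icc 1 Y, (q ^ 4) ^ m :=
          Finset.sum_le_sum fun m hm => SumLogOrbitAux.card_K q hq (Finset.mem_Icc.mp hm).1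
        have h4 := SumLogOrbitAux.geom_sum_le (q ^ 4)
          (by calc 2 ≤ 2 ^ 4 := by norm_num
                _ ≤ q ^ 4 := Nat.pow_le_pow_left hq 4) Y
        omega
      have hcount : ((T.filter (fun A : Set (Fin 4 → ZMod d) => Nat.card A ≤ Y)).card : ℝ) ≤ 2 * Real.exp (L/2) := by
        have hc1 : ((T.filter (fun A : Set (Fin 4 → ZMod d) => Nat.card A ≤ Y)).card : ℝ) ≤ 2 * (q : ℝ) ^ (4 * Y) := by
          have : ((2 * (q ^ 4) ^ Y : ℕ) : ℝ) = 2 * (q : ℝ) ^ (4 * Y) := by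
            push_cast
            rw [← pow_mul]
          rw [← this]
          exact_mod_cast hrep
        have hpow : ((q : ℝ)) ^ (4 * Y) = Real.exp ((4 * Y : ℕ) * Real.log q) := by
          rw [← Real.log_pow, Real.exp_log (by positivity)]
        have hexple : ((4 * Y : ℕ) : ℝ) * Real.log q ≤ L / 2 := by
          push_cast
          have hYY : (Y : ℝ) * (8 * Real.log q) ≤ L := by
            have h5 := hYle
            rw [hY0, le_div_iff₀ (by positivity)] at h5
            linarith
          linarith
        calc ((T.filter (fun A : Set (Fin 4 → ZMod d) => Nat.card A ≤ Y)).card : ℝ)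
            ≤ 2 * (q : ℝ) ^ (4 * Y) := hc1
          _ = 2 * Real.exp ((4 * Y : ℕ) * Real.log q) := by rw [hpow]
          _ ≤ 2 * Real.exp (L / 2) := by
              have := Real.exp_le_exp.mpr hexple
              linarith
      calc ∑ A ∈ T.filter (fun A : Set (Fin 4 → ZMod d) => Nat.card A ≤ Y), Real.log (Nat.card A)
          ≤ ∑ _A ∈ T.filter (fun A : Set (Fin 4 → ZMod d) => Nat.card A ≤ Y), LL := Finset.sum_le_sum hterm
        _ = ((T.filter (fun A : Set (Fin 4 → ZMod d) => Nat.card A ≤ Y)).card : ℝ) * LL := by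
            rw [Finset.sum_const, nsmul_eq_mul]
        _ ≤ 2 * Real.exp (L/2) * LL := mul_le_mul_of_nonneg_right hcount hLL0.le
    -- combine
    have hs0 := Real.exp_pos (L/2)
    have hss : Real.exp (L/2) * Real.exp (L/2) = nR := by
      rw [← Real.exp_add]
      have : L / 2 + L / 2 = L := by ring
      rw [this, hL, Real.exp_log hnR0]
    have hsL : L + 2 ≤ 2 * Real.exp (L/2) := by
      have := Real.add_one_le_exp (L/2)
      linarith
    have h1 : 2 * Real.exp (L/2) * L ≤ 4 * nR := by nlinarith
    have h2 : 2 * Real.exp (L/2) * L ≤ 10 * Real.log q * nR := by nlinarith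
    have h3 : 2 * Real.exp (L/2) * LL ≤ 10 * Real.log q * nR * LL / L := by
      rw [le_div_iff₀ hL0]
      nlinarith [mul_le_mul_of_nonneg_right h2 hLL0.le]
    have h4 : LL * (8 * Real.log q) / L * nR = 8 * Real.log q * nR * LL / L := by ring
    have h5 : 10 * Real.log q * nR * LL / L + 8 * Real.log q * nR * LL / L
        = 18 * Real.log q * nR * LL / L := by ring
    linarith
end

section
/- (Koksma's inequality) Let F : [0,1] → ℝ be a function of bounded variation with total variation V(F), and let x_1, ..., x_N ∈ [0,1] with discrepancy D = sup_{I ⊆ [0,1] interval} |μ(I) − (1/N)|{n : x_n ∈ I}||. Then |∫₀¹ F(t) dt − (1/N) Σ_{n=1}^N F(x_n)| ≤ V(F) · D. -/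
/-!
Both sides of the inequality are linear in `F`, and the Jordan decomposition writes `F` as a
difference `P - Q` of functions monotone on `[0,1]` with `ΔP + ΔQ = V(F)`, so it suffices to
treat a monotone `G`. By the layer cake formula, `∫ (G - G 0)` against Lebesgue measure on
`[0,1]` and against the empirical measure of the points are the integrals over
`t ∈ (0, G 1 - G 0]` of the measures of the superlevel sets `{G - G 0 > t}`. These sets are
intervals, so the two integrands differ by at most `D`, and the error is at most
`D (G 1 - G 0)`.
-/

open MeasureTheory Set
open scoped ENNReal

theorem abs_integral_sub_integral_le_of_superlevelSets {α : Type*} [MeasurableSpace α]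
    {μ ν : Measure α} [IsFiniteMeasure μ] [IsFiniteMeasure ν] {f : α → ℝ} (hf : Measurable f)
    {M D : ℝ} (hM : 0 ≤ M) (hf_mem : ∀ a, f a ∈ Icc 0 M)
    (hD : ∀ t ∈ Ioc 0 M, |μ.real {a | t < f a} - ν.real {a | t < f a}| ≤ D) :
    |∫ a, f a ∂μ - ∫ a, f a ∂ν| ≤ D * M := by
  have superlevel_antitone (ρ : Measure α) [IsFiniteMeasure ρ] :
      Antitone fun t ↦ ρ.real {a | t < f a} :=
    fun s t hst ↦ measureReal_mono fun a ha ↦ hst.trans_lt ha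
  have layer_cake (ρ : Measure α) [IsFiniteMeasure ρ] :
      ∫ a, f a ∂ρ = ∫ t in 0..M, ρ.real {a | t < f a} := by
    have hint : Integrable f ρ :=
      .of_bound hf.aestronglyMeasurable M (ae_of_all _ fun a ↦ by
        rw [Real.norm_of_nonneg (hf_mem a).1]; exact (hf_mem a).2)
    rw [hint.integral_eq_integral_meas_lt (ae_of_all _ fun a ↦ (hf_mem a).1),
      intervalIntegral.integral_of_le hM]
    refine setIntegral_eq_of_subset_of_forall_sdiff_eq_zero measurableSet_Ioi
      Ioc_subset_Ioi_self fun t ht ↦ ?_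
    have hMt : M < t := by simpa [mem_Ioi.1 ht.1] using ht.2
    simp [fun a ↦ ((hf_mem a).2.trans hMt.le).not_gt]
  rw [layer_cake μ, layer_cake ν, ← intervalIntegral.integral_sub
    (superlevel_antitone μ).intervalIntegrable (superlevel_antitone ν).intervalIntegrable]
  have := intervalIntegral.norm_integral_le_of_norm_le_const
    (f := fun t ↦ μ.real {a | t < f a} - ν.real {a | t < f a})
    fun t ht ↦ hD t (by rwa [uIoc_of_le hM] at ht)
  rwa [sub_zero, abs_of_nonneg hM, Real.norm_eq_abs] at this

theorem MonotoneOn.exists_monotone_eqOn_Icc {α β : Type*} [LinearOrder α] [Preorder β]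
    {G : α → β} {a b : α} (hab : a ≤ b) (hG : MonotoneOn G (Icc a b)) :
    ∃ g : α → β, Monotone g ∧ EqOn g G (Icc a b) ∧ ∀ x, g x ∈ Icc (G a) (G b) := by
  refine ⟨IccExtend hab fun t ↦ G t, (monotoneOn_iff_monotone.1 hG).IccExtend hab,
    fun t ht ↦ IccExtend_of_mem hab _ ht, fun x ↦ ?_⟩
  have hx := (projIcc a b hab x).2
  exact ⟨hG (left_mem_Icc.2 hab) hx hx.1, hG hx (right_mem_Icc.2 hab) hx.2⟩

theorem MonotoneOn.integrable_of_ae_mem_Icc {G : ℝ → ℝ} {a b : ℝ} (hab : a ≤ b)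
    (hG : MonotoneOn G (Icc a b)) {ν : Measure ℝ} [IsFiniteMeasure ν]
    (hν : ∀ᵐ x ∂ν, x ∈ Icc a b) : Integrable G ν := by
  obtain ⟨g, hg, hgG, hg_mem⟩ := hG.exists_monotone_eqOn_Icc hab
  exact (Integrable.of_bound hg.measurable.aestronglyMeasurable _
    (ae_of_all _ fun x ↦ abs_le_max_abs_abs (hg_mem x).1 (hg_mem x).2)).congr
    (hν.mono fun x hx ↦ hgG hx)

theorem abs_intervalIntegral_sub_integral_le_of_monotoneOn {G : ℝ → ℝ}
    (hG : MonotoneOn G (Icc 0 1)) {ν : Measure ℝ} [IsProbabilityMeasure ν]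
    (hν : ∀ᵐ a ∂ν, a ∈ Icc (0 : ℝ) 1) {D : ℝ}
    (hdisc : ∀ I ⊆ Icc (0 : ℝ) 1, I.OrdConnected → |volume.real I - ν.real I| ≤ D) :
    |(∫ t in (0 : ℝ)..1, G t) - ∫ a, G a ∂ν| ≤ D * (G 1 - G 0) := by
  have h01 : (0 : ℝ) ≤ 1 := zero_le_one
  obtain ⟨g, hg, hgG, hg_mem⟩ := hG.exists_monotone_eqOn_Icc h01
  have : IsFiniteMeasure (volume.restrict (Icc (0 : ℝ) 1)) :=
    isFiniteMeasure_restrict.2 (by simp)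
  have key := abs_integral_sub_integral_le_of_superlevelSets (μ := volume.restrict (Icc 0 1))
    (ν := ν) (f := fun a ↦ g a - G 0) (hg.measurable.sub_const _)
    (sub_nonneg.2 (hG (left_mem_Icc.2 h01) (right_mem_Icc.2 h01) h01))
    (fun a ↦ ⟨sub_nonneg.2 (hg_mem a).1, sub_le_sub_right (hg_mem a).2 _⟩) fun t _ ↦ by
      have hup : IsUpperSet {a | t < g a - G 0} :=
        fun a b hab ha ↦ ha.trans_le (sub_le_sub_right (hg hab) _)
      rw [measureReal_restrict_apply' measurableSet_Icc, measureReal_def, measureReal_def,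
        ← measure_inter_conull (t := Icc 0 1) hν]
      exact hdisc _ inter_subset_right (hup.ordConnected.inter ordConnected_Icc)
  have hint_vol : ∫ a in Icc 0 1, (g a - G 0) = (∫ t in (0 : ℝ)..1, G t) - G 0 := by
    rw [setIntegral_congr_fun (g := fun a ↦ G a - G 0) measurableSet_Icc
        fun a ha ↦ by rw [hgG ha],
      integral_Icc_eq_integral_Ioc, ← intervalIntegral.integral_of_le h01,
      intervalIntegral.integral_sub (uIcc_of_le h01 ▸ hG).intervalIntegrable
        intervalIntegrable_const]
    simp
  have hint_ν : ∫ a, (g a - G 0) ∂ν = ∫ a, G a ∂ν - G 0 := by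
    rw [integral_congr_ae (hν.mono fun a ha ↦ by rw [hgG ha]),
      integral_sub (hG.integrable_of_ae_mem_Icc h01 hν) (integrable_const _)]
    simp
  rw [hint_vol, hint_ν] at key
  convert key using 2
  ring

theorem abs_intervalIntegral_sub_integral_le_of_boundedVariationOn {F : ℝ → ℝ}
    (hF : BoundedVariationOn F (Icc 0 1)) {ν : Measure ℝ} [IsProbabilityMeasure ν]
    (hν : ∀ᵐ a ∂ν, a ∈ Icc (0 : ℝ) 1) {D : ℝ}
    (hdisc : ∀ I ⊆ Icc (0 : ℝ) 1, I.OrdConnected → |volume.real I - ν.real I| ≤ D) :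
    |(∫ t in (0 : ℝ)..1, F t) - ∫ a, F a ∂ν| ≤ (eVariationOn F (Icc 0 1)).toReal * D := by
  have h01 : (0 : ℝ) ≤ 1 := zero_le_one
  obtain ⟨P, Q, hP, hQ, rfl, hPQ⟩ :=
    hF.locallyBoundedVariationOn.exists_monotoneOn_sub_monotoneOn'
  have hvar : (eVariationOn (P - Q) (Icc 0 1)).toReal = (P 1 - P 0) + (Q 1 - Q 0) := by
    rw [hPQ 0 (left_mem_Icc.2 h01) 1 (right_mem_Icc.2 h01), variationOnFromTo.eq_of_le _ _ h01,
      inter_self]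
  have hsplit : (∫ t in (0 : ℝ)..1, (P - Q) t) - ∫ a, (P - Q) a ∂ν
      = ((∫ t in (0 : ℝ)..1, P t) - ∫ a, P a ∂ν) - ((∫ t in (0 : ℝ)..1, Q t) - ∫ a, Q a ∂ν) := by
    simp only [Pi.sub_apply]
    rw [intervalIntegral.integral_sub (uIcc_of_le h01 ▸ hP).intervalIntegrable
        (uIcc_of_le h01 ▸ hQ).intervalIntegrable,
      integral_sub (hP.integrable_of_ae_mem_Icc h01 hν) (hQ.integrable_of_ae_mem_Icc h01 hν)]
    ring
  rw [hsplit, hvar]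
  calc _ ≤ _ := abs_sub _ _
    _ ≤ D * (P 1 - P 0) + D * (Q 1 - Q 0) :=
        add_le_add (abs_intervalIntegral_sub_integral_le_of_monotoneOn hP hν hdisc)
          (abs_intervalIntegral_sub_integral_le_of_monotoneOn hQ hν hdisc)
    _ = _ := by ring

noncomputable def empiricalMeasure {α ι : Type*} [MeasurableSpace α] [Fintype ι] (x : ι → α) :
    Measure α :=
  (Fintype.card ι : ℝ≥0∞)⁻¹ • ∑ i, Measure.dirac (x i)

section empiricalMeasure

variable {α ι : Type*} [MeasurableSpace α] [MeasurableSingletonClass α] [Fintype ι] (x : ι → α)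

theorem empiricalMeasure_apply (s : Set α) :
    empiricalMeasure x s = (Fintype.card ι : ℝ≥0∞)⁻¹ * Nat.card {i // x i ∈ s} := by
  classical
  simp [empiricalMeasure, Measure.dirac_apply, indicator_apply, Finset.sum_boole,
    Nat.card_eq_fintype_card, Fintype.card_subtype]

theorem measureReal_empiricalMeasure (s : Set α) :
    (empiricalMeasure x).real s = 1 / (Fintype.card ι : ℝ) * Nat.card {i // x i ∈ s} := by
  simp [measureReal_def, empiricalMeasure_apply, ENNReal.toReal_mul]

instance [Nonempty ι] : IsProbabilityMeasure (empiricalMeasure x) :=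
  ⟨by simp [empiricalMeasure_apply, Nat.card_eq_fintype_card, ENNReal.inv_mul_cancel]⟩

theorem ae_empiricalMeasure_of_forall {p : α → Prop} (hp : ∀ i, p (x i)) :
    ∀ᵐ a ∂empiricalMeasure x, p a :=
  ae_iff.2 <| by simp [empiricalMeasure_apply, hp]

theorem integral_empiricalMeasure {E : Type*} [NormedAddCommGroup E] [NormedSpace ℝ E]
    [CompleteSpace E] (f : α → E) :
    ∫ a, f a ∂empiricalMeasure x = (Fintype.card ι : ℝ)⁻¹ • ∑ i, f (x i) := by
  rw [empiricalMeasure, integral_smul_measure, integral_finsetSum_measure]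
  · simp
  · exact fun i _ ↦ integrable_dirac enorm_lt_top

end empiricalMeasure

open MeasureTheory in
theorem koksma_inequality_general (F : ℝ → ℝ) (hF : BoundedVariationOn F (Set.Icc 0 1))
    (N : ℕ) (hN : 1 ≤ N) (x : Fin N → ℝ) (hx : ∀ n, x n ∈ Set.Icc (0 : ℝ) 1)
    (D : ℝ)
    (hdisc : ∀ I : Set ℝ, I ⊆ Set.Icc 0 1 → I.OrdConnected →
      |(volume I).toReal - (1 / (N : ℝ)) * (Nat.card {n : Fin N // x n ∈ I} : ℝ)| ≤ D) :
    |(∫ t in (0:ℝ)..1, F t) - (1 / (N : ℝ)) * ∑ n : Fin N, F (x n)|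
      ≤ (eVariationOn F (Set.Icc 0 1)).toReal * D := by
  have : Nonempty (Fin N) := ⟨⟨0, hN⟩⟩
  have h := abs_intervalIntegral_sub_integral_le_of_boundedVariationOn hF
    (ae_empiricalMeasure_of_forall x hx) fun I hI hIc ↦ by
      rw [measureReal_empiricalMeasure, Fintype.card_fin]
      exact hdisc I hI hIc
  rwa [integral_empiricalMeasure, Fintype.card_fin, smul_eq_mul, ← one_div] at h

open MeasureTheory in
/-- Koksma's inequality: if `F : [0,1] → ℝ` has bounded variation with total variation `V(F)`,
and `x₁, …, x_N ∈ [0,1]` have discrepancy at most `D` (i.e. for every subinterval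
`I ⊆ [0,1]`, `|μ(I) − (1/N)·#{n : x_n ∈ I}| ≤ D`), then
`|∫₀¹ F − (1/N) Σ F(x_n)| ≤ V(F)·D`. -/
theorem koksma_inequality (F : ℝ → ℝ) (hF : BoundedVariationOn F (Set.Icc 0 1))
    (N : ℕ) (hN : 1 ≤ N) (x : Fin N → ℝ) (hx : ∀ n, x n ∈ Set.Icc (0 : ℝ) 1)
    (D : ℝ) (hD : 0 ≤ D)
    (hdisc : ∀ I : Set ℝ, I ⊆ Set.Icc 0 1 → I.OrdConnected →
      |(volume I).toReal - (1 / (N : ℝ)) * (Nat.card {n : Fin N // x n ∈ I} : ℝ)| ≤ D) :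
    |(∫ t in (0:ℝ)..1, F t) - (1 / (N : ℝ)) * ∑ n : Fin N, F (x n)|
      ≤ (eVariationOn F (Set.Icc 0 1)).toReal * D :=
  koksma_inequality_general F hF N hN x hx D hdisc
end
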